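/- Let A, B, C be abelian categories, F : A ⥤ C right exact, G : B ⥤ C left exact. Then the Grothendieck group of the comma category satisfies K(Comma F G) ≅ K(A) ⊕ K(B), via [(A,B,α)] ↦ ([A], [B]). -/

import Mathlib

/-!
Every object `(X, Y, α)` of `Comma F G` is an extension of `(X, 0, 0)` by `(0, Y, 0)`, so its class
is `[(X, 0, 0)] + [(0, Y, 0)]`. The projections to `A` and `B` are exact, and they jointly reflect
short exact sequences; hence `X ↦ (X, 0, 0)` and `Y ↦ (0, Y, 0)` induce maps on Grothendieck
groups, which together invert `[(X, Y, α)] ↦ ([X], [Y])`.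
-/

open CategoryTheory CategoryTheory.Limits

/-- The subgroup of relations defining the Grothendieck group of an abelian category:
generated by `[X₂] - [X₁] - [X₃]` for each short exact sequence `0 → X₁ → X₂ → X₃ → 0`. -/
def grothendieckRelations (D : Type*) [Category D] [Abelian D] :
    AddSubgroup (FreeAbelianGroup D) :=
  AddSubgroup.closure {x | ∃ S : ShortComplex D, S.ShortExact ∧
    x = FreeAbelianGroup.of S.X₂ - FreeAbelianGroup.of S.X₁ - FreeAbelianGroup.of S.X₃}

/-- The Grothendieck group `K(D)` of an abelian category `D`. -/
def K0 (D : Type*) [Category D] [Abelian D] : Type _ :=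
  FreeAbelianGroup D ⧸ grothendieckRelations D

noncomputable instance (D : Type*) [Category D] [Abelian D] : AddCommGroup (K0 D) :=
  inferInstanceAs (AddCommGroup (FreeAbelianGroup D ⧸ grothendieckRelations D))

/-- The class `[X]` of an object `X` in the Grothendieck group. -/
def K0.mk {D : Type*} [Category D] [Abelian D] (X : D) : K0 D :=
  QuotientAddGroup.mk (FreeAbelianGroup.of X)

namespace CategoryTheory.ShortComplex

variable {C : Type*} [Category C] [Preadditive C] {S : ShortComplex C}

lemma shortExact_of_isZero (h₁ : IsZero S.X₁) (h₂ : IsZero S.X₂) (h₃ : IsZero S.X₃) :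
    S.ShortExact :=
  .mk' (exact_of_isZero_X₂ _ h₂) ⟨fun _ _ _ => h₁.eq_of_tgt _ _⟩ ⟨fun _ _ _ => h₃.eq_of_src _ _⟩

variable [HasZeroObject C]

lemma shortExact_of_isZero_X₁ (h₁ : IsZero S.X₁) (hg : IsIso S.g) : S.ShortExact :=
  .mk' ((S.exact_iff_mono (h₁.eq_of_src _ _)).2 inferInstance) ⟨fun _ _ _ => h₁.eq_of_tgt _ _⟩
    inferInstance

lemma shortExact_of_isZero_X₃ (h₃ : IsZero S.X₃) (hf : IsIso S.f) : S.ShortExact :=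
  .mk' ((S.exact_iff_epi (h₃.eq_of_tgt _ _)).2 inferInstance) inferInstance
    ⟨fun _ _ _ => h₃.eq_of_src _ _⟩

end CategoryTheory.ShortComplex

namespace K0

variable {D E : Type*} [Category D] [Abelian D] [Category E] [Abelian E]

lemma mk_eq_add_of_shortExact {S : ShortComplex D} (hS : S.ShortExact) :
    K0.mk S.X₂ = K0.mk S.X₁ + K0.mk S.X₃ := by
  have h : (QuotientAddGroup.mk (FreeAbelianGroup.of S.X₂ - FreeAbelianGroup.of S.X₁ -
      FreeAbelianGroup.of S.X₃) : K0 D) = 0 :=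
    (QuotientAddGroup.eq_zero_iff _).2 (AddSubgroup.subset_closure ⟨S, hS, rfl⟩)
  rwa [QuotientAddGroup.mk_sub, QuotientAddGroup.mk_sub, sub_sub, sub_eq_zero] at h

lemma mk_eq_zero_of_isZero {X : D} (hX : IsZero X) : K0.mk X = 0 :=
  left_eq_add.mp <| mk_eq_add_of_shortExact (S := .mk (0 : X ⟶ X) (0 : X ⟶ X) (by simp))
    (ShortComplex.shortExact_of_isZero hX hX hX)

variable {M : Type*} [AddCommGroup M]

noncomputable def lift (f : D → M)
    (hf : ∀ S : ShortComplex D, S.ShortExact → f S.X₂ = f S.X₁ + f S.X₃) : K0 D →+ M :=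
  QuotientAddGroup.lift _ (FreeAbelianGroup.lift f) <| (AddSubgroup.closure_le _).2 <| by
    rintro _ ⟨S, hS, rfl⟩
    simp [hf S hS]

@[simp]
lemma lift_mk (f : D → M) (hf : ∀ S : ShortComplex D, S.ShortExact → f S.X₂ = f S.X₁ + f S.X₃)
    (X : D) : lift f hf (K0.mk X) = f X :=
  (QuotientAddGroup.lift_mk _ _ _).trans (FreeAbelianGroup.lift_apply_of _ _)

@[ext]
lemma hom_ext {φ ψ : K0 D →+ M} (h : ∀ X : D, φ (K0.mk X) = ψ (K0.mk X)) : φ = ψ :=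
  QuotientAddGroup.addMonoidHom_ext _ (FreeAbelianGroup.lift_ext _ _ h)

noncomputable def map (Φ : D ⥤ E) [Φ.PreservesZeroMorphisms]
    (hΦ : ∀ S : ShortComplex D, S.ShortExact → (S.map Φ).ShortExact) : K0 D →+ K0 E :=
  lift (fun X => K0.mk (Φ.obj X)) fun S hS => mk_eq_add_of_shortExact (hΦ S hS)

@[simp]
lemma map_mk (Φ : D ⥤ E) [Φ.PreservesZeroMorphisms]
    (hΦ : ∀ S : ShortComplex D, S.ShortExact → (S.map Φ).ShortExact) (X : D) :
    map Φ hΦ (K0.mk X) = K0.mk (Φ.obj X) :=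
  lift_mk _ _ X

end K0

namespace CategoryTheory.Comma

open ZeroObject

universe w w' v₁ v₂ v₃ u₁ u₂ u₃

variable {J : Type w} [Category.{w'} J] {A : Type u₁} {B : Type u₂} {T : Type u₃}
  [Category.{v₁} A] [Category.{v₂} B] [Category.{v₃} T]
  {L : A ⥤ T} {R : B ⥤ T}

instance preservesLimitsOfShape_fst [HasLimitsOfShape J A] [HasLimitsOfShape J B]
    [PreservesLimitsOfShape J R] : PreservesLimitsOfShape J (fst L R) where
  preservesLimit :=
    preservesLimit_of_preserves_limit_cone
      (coneOfPreservesIsLimit _ (limit.isLimit _) (limit.isLimit _)) (limit.isLimit _)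

instance preservesLimitsOfShape_snd [HasLimitsOfShape J A] [HasLimitsOfShape J B]
    [PreservesLimitsOfShape J R] : PreservesLimitsOfShape J (snd L R) where
  preservesLimit :=
    preservesLimit_of_preserves_limit_cone
      (coneOfPreservesIsLimit _ (limit.isLimit _) (limit.isLimit _)) (limit.isLimit _)

lemma isZero_of_isZero_left_of_isZero_right [HasZeroMorphisms (Comma L R)] {X : Comma L R}
    (hl : IsZero X.left) (hr : IsZero X.right) : IsZero X := by
  rw [IsZero.iff_id_eq_zero]
  ext
  · exact hl.eq_of_src _ _
  · exact hr.eq_of_src _ _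

section Abelian

variable [Abelian A] [Abelian B]

instance [PreservesFiniteColimits L] : PreservesFiniteColimits (fst L R) :=
  ⟨fun _ _ _ => inferInstance⟩

instance [PreservesFiniteColimits L] : PreservesFiniteColimits (snd L R) :=
  ⟨fun _ _ _ => inferInstance⟩

variable [PreservesFiniteLimits R]

instance : PreservesFiniteLimits (fst L R) := ⟨fun _ _ _ => inferInstance⟩

instance : PreservesFiniteLimits (snd L R) := ⟨fun _ _ _ => inferInstance⟩

variable [Abelian (Comma L R)]

@[simp]
lemma zero_left (X Y : Comma L R) : (0 : X ⟶ Y).left = 0 :=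
  (fst L R).map_zero X Y

@[simp]
lemma zero_right (X Y : Comma L R) : (0 : X ⟶ Y).right = 0 :=
  (snd L R).map_zero X Y

variable [PreservesFiniteColimits L]

lemma shortExact_of_map_fst_of_map_snd {S : ShortComplex (Comma L R)}
    (h₁ : (S.map (fst L R)).ShortExact) (h₂ : (S.map (snd L R)).ShortExact) : S.ShortExact := by
  have hf : Mono S.f := ⟨fun u v h => by
    ext
    · exact h₁.mono_f.right_cancellation _ _ (congrArg CommaMorphism.left h)
    · exact h₂.mono_f.right_cancellation _ _ (congrArg CommaMorphism.right h)⟩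
  have hg : Epi S.g := ⟨fun u v h => by
    ext
    · exact h₁.epi_g.left_cancellation _ _ (congrArg CommaMorphism.left h)
    · exact h₂.epi_g.left_cancellation _ _ (congrArg CommaMorphism.right h)⟩
  refine .mk' ?_ hf hg
  rw [S.exact_iff_isZero_homology]
  exact isZero_of_isZero_left_of_isZero_right
    (((S.map _).exact_iff_isZero_homology.1 h₁.exact).of_iso (S.mapHomologyIso (fst L R)).symm)
    (((S.map _).exact_iff_isZero_homology.1 h₂.exact).of_iso (S.mapHomologyIso (snd L R)).symm)

section

variable [Abelian T] (L R)

-- Reducible, so that the components of `(ofLeft L R).obj X` are syntactically `X` and `0`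
-- inside the types of morphisms built from them.
@[simps]
noncomputable abbrev ofLeft : A ⥤ Comma L R where
  obj X := ⟨X, 0, 0⟩
  map f := ⟨f, 0, by simp⟩

@[simps]
noncomputable abbrev ofRight : B ⥤ Comma L R where
  obj Y := ⟨0, Y, 0⟩
  map g := ⟨0, g, by simp⟩

instance : (ofLeft L R).PreservesZeroMorphisms where
  map_zero _ _ := by ext; simp

instance : (ofRight L R).PreservesZeroMorphisms where
  map_zero _ _ := by ext; simp

variable {L R}

lemma shortExact_map_ofLeft {S : ShortComplex A} (hS : S.ShortExact) :
    (S.map (ofLeft L R)).ShortExact :=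
  shortExact_of_map_fst_of_map_snd hS <|
    ShortComplex.shortExact_of_isZero (isZero_zero B) (isZero_zero B) (isZero_zero B)

lemma shortExact_map_ofRight {S : ShortComplex B} (hS : S.ShortExact) :
    (S.map (ofRight L R)).ShortExact :=
  shortExact_of_map_fst_of_map_snd
    (ShortComplex.shortExact_of_isZero (isZero_zero A) (isZero_zero A) (isZero_zero A)) hS

noncomputable def rightLeftShortComplex (X : Comma L R) : ShortComplex (Comma L R) :=
  ShortComplex.mk (X₁ := (ofRight L R).obj X.right) (X₂ := X) (X₃ := (ofLeft L R).obj X.left)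
    ⟨0, 𝟙 X.right, by simp⟩ ⟨𝟙 X.left, 0, by simp⟩ (by ext)

lemma shortExact_rightLeftShortComplex (X : Comma L R) : (rightLeftShortComplex X).ShortExact :=
  shortExact_of_map_fst_of_map_snd
    (ShortComplex.shortExact_of_isZero_X₁ (isZero_zero A) (IsIso.id X.left))
    (ShortComplex.shortExact_of_isZero_X₃ (isZero_zero B) (IsIso.id X.right))

end

end Abelian

end CategoryTheory.Comma

/-- Let `A`, `B`, `C` be abelian categories, `F : A ⥤ C` right exact, `G : B ⥤ C`
left exact (so `Comma F G` is abelian). Then the Grothendieck group of the comma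
category satisfies `K(Comma F G) ≅ K(A) ⊕ K(B)`, via `[(A,B,α)] ↦ ([A],[B])`. -/
theorem comma_grothendieckGroup {A B C : Type*} [Category A] [Category B] [Category C]
    [Abelian A] [Abelian B] [Abelian C]
    (F : A ⥤ C) [PreservesFiniteColimits F] (G : B ⥤ C) [PreservesFiniteLimits G]
    [Abelian (Comma F G)] :
    ∃ e : K0 (Comma F G) ≃+ K0 A × K0 B,
      ∀ X : Comma F G, e (K0.mk X) = (K0.mk X.left, K0.mk X.right) := by
  let φ : K0 (Comma F G) →+ K0 A × K0 B :=
    (K0.map (Comma.fst F G) fun _ hS => hS.map_of_exact _).prod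
      (K0.map (Comma.snd F G) fun _ hS => hS.map_of_exact _)
  let ψ : K0 A × K0 B →+ K0 (Comma F G) :=
    (K0.map (Comma.ofLeft F G) fun _ => Comma.shortExact_map_ofLeft).coprod
      (K0.map (Comma.ofRight F G) fun _ => Comma.shortExact_map_ofRight)
  have hψφ : ψ.comp φ = .id _ := K0.hom_ext fun X => by
    simp only [φ, ψ, AddMonoidHom.comp_apply, AddMonoidHom.prod_apply, AddMonoidHom.coprod_apply,
      AddMonoidHom.id_apply, K0.map_mk, Comma.fst_obj, Comma.snd_obj]
    exact (add_comm _ _).trans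
      (K0.mk_eq_add_of_shortExact (Comma.shortExact_rightLeftShortComplex X)).symm
  have hφψ : φ.comp ψ = .id _ := by
    rw [AddMonoidHom.comp_coprod, ← AddMonoidHom.coprod_inl_inr]
    congr 1 <;> ext X <;> simp [φ, K0.mk_eq_zero_of_isZero (isZero_zero _)]
  exact ⟨φ.toAddEquiv ψ hψφ hφψ, fun _ => rfl⟩
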